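/- Define for integers i, j ≥ 1 the structure function f_{i,j}(z) = exp(−Σ_{m=1}^∞ (1/m)[(r−1)m]_x [rm]_x (x−x^{−1})^2 · [min(i,j)m]_x ([(N+1−max(i,j))m]_x − [(N−max(i,j))m]_x)/([m]_x([(N+1)m]_x − [Nm]_x)) · z^m) as a formal power series in z. Then f_{i,j}(z) = f_{j,i}(z) = Π_{k=1}^{i} f_{1,j}(x^{−i−1+2k} z) for all 1 ≤ i ≤ j. -/

import Mathlib

/-! For `i ≤ j` the exponent of `f_{i,j}` differs from that of `f_{1,j}` only through the factor
`[i m]_x = (∑_{k=1}^{i} x^{(-i-1+2k) m}) [m]_x`, so it is the sum over `k` of the exponents of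
`f_{1,j}(x^{-i-1+2k} z)`, and symmetry holds because it depends on `i, j` only through `min` and
`max`. The formal exponential turns this sum into the product: with the coefficientwise topology on
`ℂ⟦X⟧`, `expPS f` is the sum of `f^k / k!` whenever `f(0) = 0`, and `exp (f + g) = exp f · exp g`
is the Cauchy product formula together with the binomial theorem. -/

open PowerSeries

/-- `[s]_x = (x^s − x^{−s})/(x − x^{−1})` for real `s` (via complex powers). -/
noncomputable def qnum (x : ℂ) (s : ℝ) : ℂ := (x ^ (s : ℂ) - x ^ (-s : ℂ)) / (x - x⁻¹)

/-- Formal exponential of a power series (its `n`-th coefficient is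
`Σ_k (1/k!)·coeff_n(f^k)`; for `f` with zero constant term this is the usual
exponential `exp(f) = Σ_k f^k/k!`). -/
noncomputable def expPS (f : PowerSeries ℂ) : PowerSeries ℂ :=
  PowerSeries.mk fun n => ∑' k : ℕ, ((Nat.factorial k : ℂ))⁻¹ * (PowerSeries.coeff n) (f ^ k)

/-- The structure function
`f_{i,j}(z) = exp(−Σ_{m≥1} (1/m)[(r−1)m]_x[rm]_x(x−x^{−1})²·
  [min(i,j)m]_x([(N+1−max(i,j))m]_x − [(N−max(i,j))m]_x)/([m]_x([(N+1)m]_x−[Nm]_x))·z^m)`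
as a formal power series in `z`. -/
noncomputable def fps (x : ℂ) (r : ℝ) (N : ℕ) (i j : ℤ) : PowerSeries ℂ :=
  expPS (PowerSeries.mk fun m =>
    if m = 0 then 0 else
      -((1 / (m : ℂ)) * qnum x ((r - 1) * m) * qnum x (r * m) * (x - x⁻¹) ^ 2 *
        (qnum x ((min i j : ℤ) * m) *
            (qnum x (((N : ℤ) + 1 - max i j) * m) - qnum x (((N : ℤ) - max i j) * m)) /
          (qnum x (m : ℤ) * (qnum x (((N : ℤ) + 1) * m) - qnum x ((N : ℤ) * m))))))

/-- The formal power series expansion of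
`Δ(z) = (1 − x^{2r−1}z)(1 − x^{−2r+1}z)/((1 − xz)(1 − x^{−1}z))`. -/
noncomputable def Δps (x : ℂ) (r : ℝ) : PowerSeries ℂ :=
  (1 - PowerSeries.C (x ^ ((2 * r - 1 : ℝ) : ℂ)) * PowerSeries.X) *
    (1 - PowerSeries.C (x ^ ((-2 * r + 1 : ℝ) : ℂ)) * PowerSeries.X) *
    PowerSeries.mk (fun n => x ^ n) * PowerSeries.mk (fun n => x⁻¹ ^ n)

open Finset
open scoped Nat PowerSeries.WithPiTopology

theorem inv_factorial_smul_add_pow {𝕂 A : Type*} [Field 𝕂] [CharZero 𝕂] [CommSemiring A]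
    [Algebra 𝕂 A] (a b : A) (n : ℕ) :
    (n ! : 𝕂)⁻¹ • (a + b) ^ n =
      ∑ kl ∈ antidiagonal n, ((kl.1 ! : 𝕂)⁻¹ • a ^ kl.1) * ((kl.2 ! : 𝕂)⁻¹ • b ^ kl.2) := by
  rw [(Commute.all a b).add_pow', smul_sum]
  refine sum_congr rfl fun kl hkl => ?_
  rw [← Nat.cast_smul_eq_nsmul 𝕂, smul_smul, smul_mul_smul_comm, ← mem_antidiagonal.mp hkl,
    Nat.cast_add_choose, mem_antidiagonal.mp hkl]
  field_simp [n.factorial_ne_zero]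

section PowerSeriesOrder

variable {R : Type*} [Semiring R] {f g : R⟦X⟧}

theorem coeff_pow_mul_pow_of_lt (hf : constantCoeff f = 0) (hg : constantCoeff g = 0)
    {n a b : ℕ} (h : n < a + b) : coeff n (f ^ a * g ^ b) = 0 := by
  refine coeff_of_lt_order n (lt_of_lt_of_le ?_ (le_order_mul _ _))
  calc (n : ℕ∞) < a + b := by exact_mod_cast h
    _ ≤ _ := add_le_add (le_order_pow_of_constantCoeff_eq_zero a hf)
      (le_order_pow_of_constantCoeff_eq_zero b hg)

theorem coeff_pow_of_lt (hf : constantCoeff f = 0) {n k : ℕ} (h : n < k) :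
    coeff n (f ^ k) = 0 :=
  coeff_of_lt_order n ((Nat.cast_lt.mpr h).trans_le (le_order_pow_of_constantCoeff_eq_zero k hf))

end PowerSeriesOrder

theorem constantCoeff_rescale {R : Type*} [CommSemiring R] (a : R) (f : R⟦X⟧) :
    constantCoeff (rescale a f) = constantCoeff f := by
  rw [← coeff_zero_eq_constantCoeff_apply, coeff_rescale, pow_zero, one_mul,
    coeff_zero_eq_constantCoeff_apply]

section FormalExp

variable {f g : ℂ⟦X⟧}

theorem hasSum_expPS (hf : constantCoeff f = 0) :
    HasSum (fun k : ℕ => (k ! : ℂ)⁻¹ • f ^ k) (expPS f) := by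
  rw [PowerSeries.WithPiTopology.hasSum_iff_hasSum_coeff]
  intro n
  simp only [coeff_smul, expPS, coeff_mk, smul_eq_mul]
  refine (summable_of_ne_finset_zero (s := range (n + 1)) fun k hk => ?_).hasSum
  rw [coeff_pow_of_lt hf (by simpa using hk), mul_zero]

theorem expPS_zero : expPS 0 = 1 := by
  refine (hasSum_expPS (map_zero _)).unique ?_
  convert hasSum_single (f := fun k : ℕ => (k ! : ℂ)⁻¹ • (0 : ℂ⟦X⟧) ^ k) 0
    fun k hk => by rw [zero_pow hk, smul_zero]
  simp

theorem expPS_add (hf : constantCoeff f = 0) (hg : constantCoeff g = 0) :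
    expPS (f + g) = expPS f * expPS g := by
  have hprod : Summable fun kl : ℕ × ℕ =>
      ((kl.1 ! : ℂ)⁻¹ • f ^ kl.1) * ((kl.2 ! : ℂ)⁻¹ • g ^ kl.2) := by
    rw [PowerSeries.WithPiTopology.summable_iff_summable_coeff]
    intro n
    refine summable_of_ne_finset_zero (s := range (n + 1) ×ˢ range (n + 1)) fun kl hkl => ?_
    rw [smul_mul_smul_comm, coeff_smul, coeff_pow_mul_pow_of_lt hf hg, smul_zero]
    simp only [mem_product, mem_range, not_and_or, not_lt] at hkl
    omega
  rw [← (hasSum_expPS hf).tsum_eq, ← (hasSum_expPS hg).tsum_eq,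
    ← (hasSum_expPS (by rw [map_add, hf, hg, add_zero])).tsum_eq,
    (hasSum_expPS hf).summable.tsum_mul_tsum_eq_tsum_sum_antidiagonal
      (hasSum_expPS hg).summable hprod]
  simp_rw [inv_factorial_smul_add_pow]

theorem expPS_sum {ι : Type*} (s : Finset ι) (F : ι → ℂ⟦X⟧)
    (h : ∀ k ∈ s, constantCoeff (F k) = 0) :
    expPS (∑ k ∈ s, F k) = ∏ k ∈ s, expPS (F k) := by
  induction s using Finset.cons_induction with
  | empty => simp [expPS_zero]
  | cons a s ha ih =>
    rw [sum_cons, prod_cons, expPS_add (h a (mem_cons_self a s))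
        (by rw [map_sum]; exact sum_eq_zero fun k hk => h k (mem_cons_of_mem hk)),
      ih fun k hk => h k (mem_cons_of_mem hk)]

theorem rescale_expPS (a : ℂ) (f : ℂ⟦X⟧) : rescale a (expPS f) = expPS (rescale a f) := by
  ext n
  simp only [coeff_rescale, expPS, coeff_mk, ← tsum_mul_left, ← map_pow]
  exact tsum_congr fun k => by ring

end FormalExp

theorem sum_Icc_zpow_mul_sub_inv {K : Type*} [Field K] (w : K) {i : ℤ} (hi : 0 ≤ i) :
    (∑ k ∈ Icc (1 : ℤ) i, w ^ (-i - 1 + 2 * k)) * (w - w⁻¹) = w ^ i - w ^ (-i) := by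
  rcases eq_or_ne w 0 with rfl | hw
  · rcases hi.eq_or_lt with rfl | hi
    · simp
    · simp [zero_zpow _ hi.ne', zero_zpow (-i) (by omega)]
  induction i, hi using Int.leInduction with
  | base => simp
  | succ n hn ih =>
    rw [← insert_Icc_right_eq_Icc_add_one (by omega), sum_insert (by simp),
      show -(n + 1) - 1 + 2 * (n + 1) = n by ring, add_mul]
    have hterm (k : ℤ) : w ^ (-(n + 1) - 1 + 2 * k) = w⁻¹ * w ^ (-n - 1 + 2 * k) := by
      rw [← zpow_neg_one, ← zpow_add₀ hw]; ring_nf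
    simp only [hterm, ← mul_sum, mul_assoc, ih, zpow_add_one₀ hw, zpow_neg]
    field_simp
    ring

theorem qnum_intCast_mul_natCast (x : ℂ) (i : ℤ) (m : ℕ) :
    qnum x (i * m) = ((x ^ m) ^ i - (x ^ m) ^ (-i)) / (x - x⁻¹) := by
  rw [qnum]
  congr 2 <;> rw [← zpow_natCast, ← zpow_mul, ← Complex.cpow_intCast] <;> push_cast <;> ring_nf

theorem qnum_intCast_mul_natCast_eq_sum (x : ℂ) {i : ℤ} (hi : 0 ≤ i) (m : ℕ) :
    qnum x (i * m) =
      (∑ k ∈ Icc (1 : ℤ) i, (x ^ (-i - 1 + 2 * k)) ^ m) * qnum x ((1 : ℤ) * m) := by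
  have hpow (k : ℤ) : (x ^ k) ^ m = (x ^ m) ^ k := by
    rw [← zpow_natCast, ← zpow_mul, ← zpow_natCast, ← zpow_mul, mul_comm]
  simp only [qnum_intCast_mul_natCast, hpow, zpow_one, zpow_neg_one, mul_div_assoc',
    sum_Icc_zpow_mul_sub_inv _ hi]

noncomputable def fpsExponent (x : ℂ) (r : ℝ) (N : ℕ) (i j : ℤ) : ℂ⟦X⟧ :=
  PowerSeries.mk fun m =>
    if m = 0 then 0 else
      -((1 / (m : ℂ)) * qnum x ((r - 1) * m) * qnum x (r * m) * (x - x⁻¹) ^ 2 *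
        (qnum x ((min i j : ℤ) * m) *
            (qnum x (((N : ℤ) + 1 - max i j) * m) - qnum x (((N : ℤ) - max i j) * m)) /
          (qnum x (m : ℤ) * (qnum x (((N : ℤ) + 1) * m) - qnum x ((N : ℤ) * m)))))

section StructureFunction

variable (x : ℂ) (r : ℝ) (N : ℕ) (i j : ℤ)

theorem fps_eq_expPS_fpsExponent : fps x r N i j = expPS (fpsExponent x r N i j) := rfl

theorem constantCoeff_fpsExponent : constantCoeff (fpsExponent x r N i j) = 0 := by
  rw [← coeff_zero_eq_constantCoeff_apply, fpsExponent, coeff_mk, if_pos rfl]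

theorem fps_comm : fps x r N i j = fps x r N j i := by
  rw [fps, fps, min_comm, max_comm]

theorem fpsExponent_eq_sum_rescale (hi : 1 ≤ i) (hij : i ≤ j) :
    fpsExponent x r N i j =
      ∑ k ∈ Icc (1 : ℤ) i, rescale (x ^ (-i - 1 + 2 * k)) (fpsExponent x r N 1 j) := by
  ext m
  rcases eq_or_ne m 0 with rfl | hm
  · simp [fpsExponent]
  have hj : 1 ≤ j := hi.trans hij
  simp only [map_sum, coeff_rescale, fpsExponent, coeff_mk, if_neg hm, min_eq_left hij,
    max_eq_right hij, min_eq_left hj, max_eq_right hj,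
    qnum_intCast_mul_natCast_eq_sum x (zero_le_one.trans hi) m, ← sum_mul]
  ring

end StructureFunction

theorem fps_symm_and_fusion_general (x : ℂ) (r : ℝ) (N : ℕ) (i j : ℤ) (hi : 1 ≤ i) (hij : i ≤ j) :
    fps x r N i j = fps x r N j i ∧
      fps x r N i j = ∏ k ∈ Finset.Icc (1 : ℤ) i,
        PowerSeries.rescale (x ^ (-i - 1 + 2 * k)) (fps x r N 1 j) := by
  refine ⟨fps_comm x r N i j, ?_⟩
  rw [fps_eq_expPS_fpsExponent, fpsExponent_eq_sum_rescale x r N i j hi hij,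
    expPS_sum _ _ fun k _ => by rw [constantCoeff_rescale, constantCoeff_fpsExponent]]
  simp only [fps_eq_expPS_fpsExponent, rescale_expPS]

/-- `f_{i,j}(z) = f_{j,i}(z) = Π_{k=1}^{i} f_{1,j}(x^{−i−1+2k} z)` for `1 ≤ i ≤ j`,
assuming the denominators `[m]_x([(N+1)m]_x − [Nm]_x)` are nonzero for `m ≥ 1`. -/
theorem fps_symm_and_fusion (x : ℂ) (hx0 : x ≠ 0) (hx1 : ‖x‖ < 1)
    (r : ℝ) (hr : 1 < r) (N : ℕ) (hN : 1 ≤ N)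
    (hden : ∀ m : ℕ, 1 ≤ m →
      qnum x (m : ℤ) * (qnum x (((N : ℤ) + 1) * m) - qnum x ((N : ℤ) * m)) ≠ 0)
    (i j : ℤ) (hi : 1 ≤ i) (hij : i ≤ j) :
    fps x r N i j = fps x r N j i ∧
      fps x r N i j = ∏ k ∈ Finset.Icc (1 : ℤ) i,
        PowerSeries.rescale (x ^ (-i - 1 + 2 * k)) (fps x r N 1 j) :=
  fps_symm_and_fusion_general x r N i j hi hij
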